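/- If A is a symmetric n×n real matrix whose eigenvalues satisfy a strict gap |λ₁| > |λᵢ| for i ≥ 2, with orthonormal eigenbasis v₁,…,vₙ, and r₀ has nonzero component along v₁ (⟨r₀, v₁⟩ ≠ 0), then λ₁^{-k} A^k r₀ converges to ⟨r₀, v₁⟩ v₁. -/

import Mathlib

/-!
Expanding `r₀` in the eigenbasis gives
`(λ₀ ^ k)⁻¹ • A ^ k r₀ = ∑ i, (λᵢ / λ₀) ^ k ⟪r₀, vᵢ⟫ vᵢ`; the spectral gap makes every ratio
`λᵢ / λ₀` with `i ≠ 0` have absolute value `< 1`, so only the `i = 0` term survives in the limit.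
-/

open Filter Topology
open scoped RealInnerProductSpace

theorem Module.End.pow_apply_eq_sum_of_eigenbasis {R M ι : Type*} [CommSemiring R]
    [AddCommMonoid M] [Module R M] [Fintype ι] (b : Module.Basis ι R M) {f : Module.End R M}
    {lam : ι → R} (hf : ∀ i, f (b i) = lam i • b i) (k : ℕ) (x : M) :
    (f ^ k) x = ∑ i, (lam i ^ k * b.repr x i) • b i := by
  have hpow : ∀ i, (f ^ k) (b i) = lam i ^ k • b i := fun i => by
    induction k with
    | zero => simp
    | succ k ih => rw [pow_succ', Module.End.mul_apply, ih, map_smul, hf, smul_smul, ← pow_succ]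
  conv_lhs => rw [← b.sum_repr x]
  simp only [map_sum, map_smul, hpow, smul_smul, mul_comm]

theorem tendsto_div_pow_atTop_nhds_ite {𝕜 ι : Type*} [NormedField 𝕜] [DecidableEq ι]
    {lam : ι → 𝕜} {i₀ : ι} (hgap : ∀ i, i ≠ i₀ → ‖lam i‖ < ‖lam i₀‖) (hlam : lam i₀ ≠ 0)
    (i : ι) :
    Tendsto (fun k : ℕ => (lam i / lam i₀) ^ k) atTop (𝓝 (if i = i₀ then 1 else 0)) := by
  split_ifs with hi
  · simp [hi, div_self hlam]
  · refine tendsto_pow_atTop_nhds_zero_of_norm_lt_one ?_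
    rw [norm_div, div_lt_one (norm_pos_iff.mpr hlam)]
    exact hgap i hi

theorem Module.End.tendsto_inv_pow_smul_pow_apply_of_eigenbasis {𝕜 E ι : Type*}
    [NormedField 𝕜] [NormedAddCommGroup E] [NormedSpace 𝕜 E] [Fintype ι] [DecidableEq ι]
    (b : Module.Basis ι 𝕜 E) {f : Module.End 𝕜 E} {lam : ι → 𝕜}
    (hf : ∀ i, f (b i) = lam i • b i) {i₀ : ι} (hgap : ∀ i, i ≠ i₀ → ‖lam i‖ < ‖lam i₀‖)
    (hlam : lam i₀ ≠ 0) (x : E) :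
    Tendsto (fun k : ℕ => (lam i₀ ^ k)⁻¹ • (f ^ k) x) atTop (𝓝 (b.repr x i₀ • b i₀)) := by
  have hsum : ∀ k : ℕ, (lam i₀ ^ k)⁻¹ • (f ^ k) x
      = ∑ i, ((lam i / lam i₀) ^ k * b.repr x i) • b i := fun k => by
    rw [pow_apply_eq_sum_of_eigenbasis b hf, Finset.smul_sum]
    refine Finset.sum_congr rfl fun i _ => ?_
    rw [smul_smul, div_pow, div_eq_inv_mul, mul_assoc]
  have hlim : b.repr x i₀ • b i₀ = ∑ i, ((if i = i₀ then 1 else 0) * b.repr x i) • b i := by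
    simp [ite_mul]
  simp only [hsum, hlim]
  exact tendsto_finsetSum _ fun i _ =>
    ((tendsto_div_pow_atTop_nhds_ite hgap hlam i).mul_const _).smul_const _

theorem stmt_9_general {n : ℕ} [NeZero n] (A : Matrix (Fin n) (Fin n) ℝ)
    (v : Fin n → EuclideanSpace ℝ (Fin n)) (hv : Orthonormal ℝ v)
    (lam : Fin n → ℝ)
    (heig : ∀ i, Matrix.toEuclideanLin A (v i) = lam i • v i)
    (hgap : ∀ i, i ≠ 0 → |lam i| < |lam 0|) (hlam : lam 0 ≠ 0)
    (r₀ : EuclideanSpace ℝ (Fin n)) :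
    Tendsto (fun k : ℕ => ((lam 0) ^ k)⁻¹ • Matrix.toEuclideanLin (A ^ k) r₀)
      atTop (nhds (⟪r₀, v 0⟫ • v 0)) := by
  let b : OrthonormalBasis (Fin n) ℝ (EuclideanSpace ℝ (Fin n)) :=
    (basisOfOrthonormalOfCardEqFinrank hv (by simp)).toOrthonormalBasis
      (by rwa [coe_basisOfOrthonormalOfCardEqFinrank])
  have hb : ⇑b = v := by simp [b, coe_basisOfOrthonormalOfCardEqFinrank]
  have hlim := Module.End.tendsto_inv_pow_smul_pow_apply_of_eigenbasis b.toBasis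
    (f := Matrix.toEuclideanLin A) (by simpa [hb] using heig) (i₀ := 0) hgap hlam r₀
  simpa [Matrix.toLpLin_pow, b.repr_apply_apply, hb, real_inner_comm] using hlim

theorem stmt_9 {n : ℕ} [NeZero n] (A : Matrix (Fin n) (Fin n) ℝ) (hA : A.IsSymm)
    (v : Fin n → EuclideanSpace ℝ (Fin n)) (hv : Orthonormal ℝ v)
    (lam : Fin n → ℝ)
    (heig : ∀ i, Matrix.toEuclideanLin A (v i) = lam i • v i)
    (hgap : ∀ i, i ≠ 0 → |lam i| < |lam 0|) (hlam : lam 0 ≠ 0)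
    (r₀ : EuclideanSpace ℝ (Fin n)) (hr : ⟪r₀, v 0⟫ ≠ 0) :
    Tendsto (fun k : ℕ => ((lam 0) ^ k)⁻¹ • Matrix.toEuclideanLin (A ^ k) r₀)
      atTop (nhds (⟪r₀, v 0⟫ • v 0)) :=
  stmt_9_general A v hv lam heig hgap hlam r₀
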